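/- Let M = (M_x)_{x∈X} and N = (N_y)_{y∈Y} be POVMs on ℂ^{d₁} and ℂ^{d₂}, and M' = (M'_x)_{x∈X'} and N' = (N'_y)_{y∈Y'} POVMs on ℂ^{d₁'} and ℂ^{d₂'}, with all outcome sets finite. Suppose M' ≤_h M and N' ≤_h N (M' is a hybrid processing of M and N' of N). Then every POVM reachable from (M', N') by the broadcasting-local-measurements-post-processing (BLMPP) protocol is also reachable from (M, N): for every e ∈ ℕ, every finite set Z, and every POVM (G_z)_{z∈Z} on ℂ^e, if there exist a channel Φ from e×e matrices to (d₁'·d₂')×(d₁'·d₂') matrices and a stochastic kernel β: Z × (X'×Y') → [0,1] with tr[ρ G_z] = Σ_{(x,y)∈X'×Y'} β(z|x,y) tr[Φ(ρ)(M'_x ⊗ N'_y)] for all ρ and z, then there exist a channel Φ' from e×e matrices to (d₁·d₂)×(d₁·d₂) matrices and a stochastic kernel β': Z × (X×Y) → [0,1] with tr[ρ G_z] = Σ_{(x,y)∈X×Y} β'(z|x,y) tr[Φ'(ρ)(M_x ⊗ N_y)] for all ρ and z. -/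

import Mathlib

open Kronecker Matrix
open scoped ComplexOrder

noncomputable section

/-- A linear map between matrix algebras is completely positive if it maps positive
semidefinite block matrices (with any finite number of blocks) to positive semidefinite
block matrices, blockwise. -/
def IsCPMap {m n : Type} [Fintype m] [DecidableEq m] [Fintype n] [DecidableEq n]
    (Φ : Matrix m m ℂ →ₗ[ℂ] Matrix n n ℂ) : Prop :=
  ∀ (k : ℕ) (A : Matrix (Fin k × m) (Fin k × m) ℂ), A.PosSemidef →
    (Matrix.of fun (p q : Fin k × n) =>
      Φ (Matrix.of fun a b => A (p.1, a) (q.1, b)) p.2 q.2).PosSemidef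

/-- A quantum channel: a trace-preserving completely positive linear map. -/
def IsChannel {m n : Type} [Fintype m] [DecidableEq m] [Fintype n] [DecidableEq n]
    (Φ : Matrix m m ℂ →ₗ[ℂ] Matrix n n ℂ) : Prop :=
  IsCPMap Φ ∧ ∀ ρ : Matrix m m ℂ, (Φ ρ).trace = ρ.trace

/-- A POVM with finite outcome set `X`: positive semidefinite effects summing to the identity. -/
def IsPOVM {X : Type} [Fintype X] {m : Type} [Fintype m] [DecidableEq m]
    (M : X → Matrix m m ℂ) : Prop :=
  (∀ x, (M x).PosSemidef) ∧ ∑ x, M x = 1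

/-- A PVM: a POVM all of whose effects are orthogonal projections. -/
def IsPVM {X : Type} [Fintype X] {m : Type} [Fintype m] [DecidableEq m]
    (M : X → Matrix m m ℂ) : Prop :=
  IsPOVM M ∧ ∀ x, (M x)ᴴ = M x ∧ M x * M x = M x

/-- `G` is generated through broadcasting from `M` and `N` if there is a channel `Φ`
such that `tr[Φ(ρ)(M x ⊗ N y)] = tr[ρ G x y]` for all `ρ, x, y`. -/
def GenByBroadcast {X Y : Type} [Fintype X] [Fintype Y]
    {d m n : Type} [Fintype d] [DecidableEq d] [Fintype m] [DecidableEq m]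
    [Fintype n] [DecidableEq n]
    (M : X → Matrix m m ℂ) (N : Y → Matrix n n ℂ)
    (G : X → Y → Matrix d d ℂ) : Prop :=
  ∃ Φ : Matrix d d ℂ →ₗ[ℂ] Matrix (m × n) (m × n) ℂ, IsChannel Φ ∧
    ∀ (ρ : Matrix d d ℂ) (x : X) (y : Y),
      (Φ ρ * (M x ⊗ₖ N y)).trace = (ρ * G x y).trace

/-- `M'` is a hybrid processing of `M`: there are a channel `Φ` and a stochastic kernel `β`
with `tr[ρ M'_z] = Σ_x β(z|x) tr[Φ(ρ) M_x]` for all `ρ, z`. -/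
def IsHybridProc {Z X : Type} [Fintype Z] [Fintype X]
    {d' d : Type} [Fintype d'] [DecidableEq d'] [Fintype d] [DecidableEq d]
    (M' : Z → Matrix d' d' ℂ) (M : X → Matrix d d ℂ) : Prop :=
  ∃ (Φ : Matrix d' d' ℂ →ₗ[ℂ] Matrix d d ℂ) (β : Z → X → ℝ),
    IsChannel Φ ∧ (∀ z x, 0 ≤ β z x ∧ β z x ≤ 1) ∧ (∀ x, ∑ z, β z x = 1) ∧
    ∀ (ρ : Matrix d' d' ℂ) (z : Z),
      (ρ * M' z).trace = ∑ x, (β z x : ℂ) * (Φ ρ * M x).trace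

/-!
Hybrid processing is a preorder compatible with tensor products. In the Heisenberg picture,
`M' ≤_h M` via `(Φ, β)` says `M'_z = Σ_x β(z|x) Φ†(M_x)`, where `Φ†` is the dual of `Φ` for the
pairing `(ρ, B) ↦ tr[ρ B]`. Since `(Φ₁ ⊗ Φ₂)† (M_x ⊗ N_y) = Φ₁†(M_x) ⊗ Φ₂†(N_y)`, the channel
`Φ₁ ⊗ Φ₂ = (id ⊗ Φ₂) ∘ (Φ₁ ⊗ id)` together with the product kernel shows `M' ⊗ N' ≤_h M ⊗ N`.
A BLMPP realisation of `G` from `(M', N')` is exactly `G ≤_h M' ⊗ N'`, and composing channels and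
kernels gives transitivity.
-/

section TraceDual

variable {m n : Type}

def traceDual [DecidableEq m] [Fintype n] (Φ : Matrix m m ℂ →ₗ[ℂ] Matrix n n ℂ)
    (B : Matrix n n ℂ) : Matrix m m ℂ :=
  Matrix.of fun j i => (Φ (single i j 1) * B).trace

variable [Fintype m] [DecidableEq m] [Fintype n]

theorem trace_map_mul_eq_trace_mul_traceDual (Φ : Matrix m m ℂ →ₗ[ℂ] Matrix n n ℂ)
    (ρ : Matrix m m ℂ) (B : Matrix n n ℂ) :
    (Φ ρ * B).trace = (ρ * traceDual Φ B).trace := by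
  have hρ : ρ = ∑ i, ∑ j, ρ i j • single i j (1 : ℂ) := by
    simpa only [smul_single, smul_eq_mul, mul_one] using matrix_eq_sum_single ρ
  conv_lhs => rw [hρ]
  simp only [map_sum, map_smul, Matrix.sum_mul, smul_mul, trace_sum, trace_smul, smul_eq_mul]
  simp only [trace, Matrix.diag, mul_apply, traceDual, of_apply]

theorem eq_sum_smul_traceDual {X : Type} [Fintype X] (Φ : Matrix m m ℂ →ₗ[ℂ] Matrix n n ℂ)
    (c : X → ℂ) (M : X → Matrix n n ℂ) (M' : Matrix m m ℂ)
    (h : ∀ ρ, (ρ * M').trace = ∑ x, c x * (Φ ρ * M x).trace) :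
    M' = ∑ x, c x • traceDual Φ (M x) :=
  ext_iff_trace_mul_left.2 fun ρ => by
    simp only [h, trace_map_mul_eq_trace_mul_traceDual, Matrix.mul_sum, Matrix.mul_smul,
      trace_sum, trace_smul, smul_eq_mul]

end TraceDual

section Kronecker

variable {m n : Type}

theorem Matrix.sum_kronecker_sum {α ι κ l o : Type} [NonUnitalNonAssocSemiring α]
    [Fintype ι] [Fintype κ] (A : ι → Matrix l m α) (B : κ → Matrix n o α) :
    (∑ i, A i) ⊗ₖ (∑ j, B j) = ∑ i, ∑ j, A i ⊗ₖ B j := by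
  ext
  simp [sum_apply, Finset.sum_mul_sum]

variable [Fintype m] [Fintype n]

theorem trace_mul_kronecker_eq_sum_left_blocks (σ : Matrix (m × n) (m × n) ℂ)
    (A : Matrix m m ℂ) (C : Matrix n n ℂ) :
    (σ * (A ⊗ₖ C)).trace = ∑ b, ∑ d, (σ.submatrix (·, b) (·, d) * A).trace * C d b := by
  simp only [trace, Matrix.diag, mul_apply, Fintype.sum_prod_type, kroneckerMap_apply,
    submatrix_apply, Finset.sum_mul, mul_assoc]
  rw [Finset.sum_comm]
  refine Finset.sum_congr rfl fun b _ => ?_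
  conv_rhs => rw [Finset.sum_comm]
  exact Finset.sum_congr rfl fun a _ => Finset.sum_comm

theorem trace_mul_kronecker_eq_sum_right_blocks (σ : Matrix (m × n) (m × n) ℂ)
    (A : Matrix m m ℂ) (C : Matrix n n ℂ) :
    (σ * (A ⊗ₖ C)).trace = ∑ a, ∑ c, A c a * (σ.submatrix (a, ·) (c, ·) * C).trace := by
  simp only [trace, Matrix.diag, mul_apply, Fintype.sum_prod_type, kroneckerMap_apply,
    submatrix_apply, Finset.mul_sum]
  refine Finset.sum_congr rfl fun a _ => ?_
  rw [Finset.sum_comm]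
  exact Finset.sum_congr rfl fun c _ => Finset.sum_congr rfl fun b _ =>
    Finset.sum_congr rfl fun d _ => by ring

end Kronecker

section Channel

variable {m n o : Type} [Fintype m] [DecidableEq m] [Fintype n] [DecidableEq n]
  [Fintype o] [DecidableEq o]

theorem IsCPMap.comp {Φ : Matrix m m ℂ →ₗ[ℂ] Matrix n n ℂ} {Ψ : Matrix n n ℂ →ₗ[ℂ] Matrix o o ℂ}
    (hΨ : IsCPMap Ψ) (hΦ : IsCPMap Φ) : IsCPMap (Ψ ∘ₗ Φ) :=
  fun k A hA => hΨ k _ (hΦ k A hA)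

theorem IsChannel.comp {Φ : Matrix m m ℂ →ₗ[ℂ] Matrix n n ℂ}
    {Ψ : Matrix n n ℂ →ₗ[ℂ] Matrix o o ℂ} (hΨ : IsChannel Ψ) (hΦ : IsChannel Φ) :
    IsChannel (Ψ ∘ₗ Φ) :=
  ⟨hΨ.1.comp hΦ.1, fun ρ => (hΨ.2 _).trans (hΦ.2 ρ)⟩

theorem IsCPMap.posSemidef_blocks {Φ : Matrix m m ℂ →ₗ[ℂ] Matrix n n ℂ} (hΦ : IsCPMap Φ)
    {ι : Type} [Fintype ι] {A : Matrix (ι × m) (ι × m) ℂ} (hA : A.PosSemidef) :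
    (Matrix.of fun (p q : ι × n) =>
      Φ (Matrix.of fun a b => A (p.1, a) (q.1, b)) p.2 q.2).PosSemidef := by
  let e := Fintype.equivFin ι
  have h := (hΦ _ _ (hA.submatrix (Prod.map e.symm id))).submatrix (Prod.map e id)
  convert h using 1
  ext p q
  simp

end Channel

section TensorMap

variable {m m' n n' : Type}

def rTensorMap (Φ : Matrix m m ℂ →ₗ[ℂ] Matrix m' m' ℂ) :
    Matrix (m × n) (m × n) ℂ →ₗ[ℂ] Matrix (m' × n) (m' × n) ℂ where
  toFun σ := Matrix.of fun p q => Φ (σ.submatrix (·, p.2) (·, q.2)) p.1 q.1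
  map_add' σ τ := by ext; simp [submatrix_add]
  map_smul' c σ := by ext; simp [submatrix_smul]

def lTensorMap (Φ : Matrix n n ℂ →ₗ[ℂ] Matrix n' n' ℂ) :
    Matrix (m × n) (m × n) ℂ →ₗ[ℂ] Matrix (m × n') (m × n') ℂ where
  toFun σ := Matrix.of fun p q => Φ (σ.submatrix (p.1, ·) (q.1, ·)) p.2 q.2
  map_add' σ τ := by ext; simp [submatrix_add]
  map_smul' c σ := by ext; simp [submatrix_smul]

variable [Fintype m] [Fintype m'] [Fintype n] [Fintype n']

theorem trace_rTensorMap_mul_kronecker [DecidableEq m] (Φ : Matrix m m ℂ →ₗ[ℂ] Matrix m' m' ℂ)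
    (σ : Matrix (m × n) (m × n) ℂ) (A : Matrix m' m' ℂ) (C : Matrix n n ℂ) :
    (rTensorMap Φ σ * (A ⊗ₖ C)).trace = (σ * (traceDual Φ A ⊗ₖ C)).trace := by
  simp only [trace_mul_kronecker_eq_sum_left_blocks, ← trace_map_mul_eq_trace_mul_traceDual]
  rfl

theorem trace_lTensorMap_mul_kronecker [DecidableEq n] (Φ : Matrix n n ℂ →ₗ[ℂ] Matrix n' n' ℂ)
    (σ : Matrix (m × n) (m × n) ℂ) (A : Matrix m m ℂ) (C : Matrix n' n' ℂ) :
    (lTensorMap Φ σ * (A ⊗ₖ C)).trace = (σ * (A ⊗ₖ traceDual Φ C)).trace := by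
  simp only [trace_mul_kronecker_eq_sum_right_blocks, ← trace_map_mul_eq_trace_mul_traceDual]
  rfl

variable [DecidableEq m] [DecidableEq m'] [DecidableEq n] [DecidableEq n']

theorem IsChannel.rTensorMap {Φ : Matrix m m ℂ →ₗ[ℂ] Matrix m' m' ℂ} (hΦ : IsChannel Φ) :
    IsChannel (rTensorMap Φ : Matrix (m × n) (m × n) ℂ →ₗ[ℂ] _) := by
  refine ⟨fun k A hA => ?_, fun σ => ?_⟩
  · -- regard the `Fin k`-block matrix `A` over `m × n` as a `(Fin k × n)`-block matrix over `m`
    let e : (Fin k × n) × m → Fin k × (m × n) := fun r => (r.1.1, (r.2, r.1.2))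
    let f : Fin k × (m' × n) → (Fin k × n) × m' := fun p => ((p.1, p.2.2), p.2.1)
    exact (hΦ.1.posSemidef_blocks (hA.submatrix e)).submatrix f
  · have h b := hΦ.2 (σ.submatrix (·, b) (·, b))
    simp only [trace, Matrix.diag, Fintype.sum_prod_type_right] at h ⊢
    exact Finset.sum_congr rfl fun b _ => h b

theorem IsChannel.lTensorMap {Φ : Matrix n n ℂ →ₗ[ℂ] Matrix n' n' ℂ} (hΦ : IsChannel Φ) :
    IsChannel (lTensorMap Φ : Matrix (m × n) (m × n) ℂ →ₗ[ℂ] _) := by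
  refine ⟨fun k A hA => ?_, fun σ => ?_⟩
  · let e : (Fin k × m) × n → Fin k × (m × n) := fun r => (r.1.1, (r.1.2, r.2))
    let f : Fin k × (m × n') → (Fin k × m) × n' := fun p => ((p.1, p.2.1), p.2.2)
    exact (hΦ.1.posSemidef_blocks (hA.submatrix e)).submatrix f
  · have h a := hΦ.2 (σ.submatrix (a, ·) (a, ·))
    simp only [trace, Matrix.diag, Fintype.sum_prod_type] at h ⊢
    exact Finset.sum_congr rfl fun a _ => h a

end TensorMap

section StochasticKernel

variable {X Y Z W : Type}

def IsStochasticKernel [Fintype Z] (β : Z → X → ℝ) : Prop :=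
  (∀ z x, 0 ≤ β z x ∧ β z x ≤ 1) ∧ ∀ x, ∑ z, β z x = 1

theorem IsStochasticKernel.of_nonneg [Fintype Z] {β : Z → X → ℝ} (h0 : ∀ z x, 0 ≤ β z x)
    (h1 : ∀ x, ∑ z, β z x = 1) : IsStochasticKernel β :=
  ⟨fun z x => ⟨h0 z x, h1 x ▸ Finset.single_le_sum (fun z' _ => h0 z' x) (Finset.mem_univ z)⟩,
    h1⟩

theorem IsStochasticKernel.comp [Fintype Y] [Fintype Z] {β : Z → Y → ℝ} {γ : Y → X → ℝ}
    (hβ : IsStochasticKernel β) (hγ : IsStochasticKernel γ) :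
    IsStochasticKernel fun z x => ∑ y, β z y * γ y x := by
  refine .of_nonneg (fun z x => Finset.sum_nonneg fun y _ => mul_nonneg (hβ.1 z y).1 (hγ.1 y x).1)
    fun x => ?_
  rw [Finset.sum_comm]
  simp only [← Finset.sum_mul, hβ.2, one_mul, hγ.2]

theorem IsStochasticKernel.prod [Fintype Z] [Fintype W] {β : Z → X → ℝ} {γ : W → Y → ℝ}
    (hβ : IsStochasticKernel β) (hγ : IsStochasticKernel γ) :
    IsStochasticKernel fun (z : Z × W) (x : X × Y) => β z.1 x.1 * γ z.2 x.2 :=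
  .of_nonneg (fun z x => mul_nonneg (hβ.1 z.1 x.1).1 (hγ.1 z.2 x.2).1) fun x => by
    simp only [Fintype.sum_prod_type, ← Finset.sum_mul_sum, hβ.2, hγ.2, one_mul]

end StochasticKernel

section HybridProcessing

variable {X Y Z X' Y' : Type} [Fintype X] [Fintype Y] [Fintype Z] [Fintype X'] [Fintype Y']
  {d d' m m' n n' : Type} [Fintype d] [DecidableEq d] [Fintype d'] [DecidableEq d']
  [Fintype m] [DecidableEq m] [Fintype m'] [DecidableEq m']
  [Fintype n] [DecidableEq n] [Fintype n'] [DecidableEq n']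

theorem IsHybridProc.trans {G : Z → Matrix d d ℂ} {K : Y → Matrix d' d' ℂ}
    {L : X → Matrix m m ℂ} (hGK : IsHybridProc G K) (hKL : IsHybridProc K L) :
    IsHybridProc G L := by
  obtain ⟨Φ, β, hΦ, hβ01, hβ1, hG⟩ := hGK
  obtain ⟨Ψ, γ, hΨ, hγ01, hγ1, hK⟩ := hKL
  obtain ⟨hβγ01, hβγ1⟩ := IsStochasticKernel.comp ⟨hβ01, hβ1⟩ ⟨hγ01, hγ1⟩
  refine ⟨Ψ ∘ₗ Φ, _, hΨ.comp hΦ, hβγ01, hβγ1, fun ρ z => ?_⟩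
  simp only [hG, hK, LinearMap.comp_apply, Finset.mul_sum, Finset.sum_mul, Complex.ofReal_sum,
    Complex.ofReal_mul, mul_assoc]
  exact Finset.sum_comm

theorem IsHybridProc.kronecker {M' : X' → Matrix m' m' ℂ} {M : X → Matrix m m ℂ}
    {N' : Y' → Matrix n' n' ℂ} {N : Y → Matrix n n ℂ}
    (hM : IsHybridProc M' M) (hN : IsHybridProc N' N) :
    IsHybridProc (fun q : X' × Y' => M' q.1 ⊗ₖ N' q.2) (fun p : X × Y => M p.1 ⊗ₖ N p.2) := by
  obtain ⟨Φ₁, β₁, hΦ₁, hβ₁01, hβ₁1, hM⟩ := hM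
  obtain ⟨Φ₂, β₂, hΦ₂, hβ₂01, hβ₂1, hN⟩ := hN
  obtain ⟨hβ01, hβ1⟩ := IsStochasticKernel.prod ⟨hβ₁01, hβ₁1⟩ ⟨hβ₂01, hβ₂1⟩
  refine ⟨lTensorMap Φ₂ ∘ₗ rTensorMap Φ₁, _, hΦ₂.lTensorMap.comp hΦ₁.rTensorMap, hβ01, hβ1,
    fun σ q => ?_⟩
  dsimp only
  rw [eq_sum_smul_traceDual Φ₁ _ M (M' q.1) (hM · q.1),
    eq_sum_smul_traceDual Φ₂ _ N (N' q.2) (hN · q.2)]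
  simp only [LinearMap.comp_apply, trace_lTensorMap_mul_kronecker, trace_rTensorMap_mul_kronecker,
    sum_kronecker_sum, smul_kronecker, kronecker_smul, Matrix.mul_sum, Matrix.mul_smul, trace_sum,
    trace_smul, smul_eq_mul, Fintype.sum_prod_type, Complex.ofReal_mul, mul_assoc, mul_left_comm]

end HybridProcessing

theorem statement16_general
    (d₁ d₂ d₁' d₂' : ℕ)
    (X Y X' Y' : Type) [Fintype X] [Fintype Y] [Fintype X'] [Fintype Y']
    (M : X → Matrix (Fin d₁) (Fin d₁) ℂ)
    (N : Y → Matrix (Fin d₂) (Fin d₂) ℂ)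
    (M' : X' → Matrix (Fin d₁') (Fin d₁') ℂ)
    (N' : Y' → Matrix (Fin d₂') (Fin d₂') ℂ)
    (hMM : IsHybridProc M' M) (hNN : IsHybridProc N' N)
    (e : ℕ) (Z : Type) [Fintype Z]
    (G : Z → Matrix (Fin e) (Fin e) ℂ)
    (Φ : Matrix (Fin e) (Fin e) ℂ →ₗ[ℂ] Matrix (Fin d₁' × Fin d₂') (Fin d₁' × Fin d₂') ℂ)
    (hΦ : IsChannel Φ)
    (β : Z → X' × Y' → ℝ)
    (hβ01 : ∀ z p, 0 ≤ β z p ∧ β z p ≤ 1) (hβ1 : ∀ p, ∑ z, β z p = 1)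
    (hrep : ∀ (ρ : Matrix (Fin e) (Fin e) ℂ) (z : Z),
      (ρ * G z).trace =
        ∑ p : X' × Y', (β z p : ℂ) * (Φ ρ * (M' p.1 ⊗ₖ N' p.2)).trace) :
    ∃ (Φ' : Matrix (Fin e) (Fin e) ℂ →ₗ[ℂ] Matrix (Fin d₁ × Fin d₂) (Fin d₁ × Fin d₂) ℂ)
      (β' : Z → X × Y → ℝ),
      IsChannel Φ' ∧ (∀ z p, 0 ≤ β' z p ∧ β' z p ≤ 1) ∧ (∀ p, ∑ z, β' z p = 1) ∧
      ∀ (ρ : Matrix (Fin e) (Fin e) ℂ) (z : Z),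
        (ρ * G z).trace =
          ∑ p : X × Y, (β' z p : ℂ) * (Φ' ρ * (M p.1 ⊗ₖ N p.2)).trace :=
  IsHybridProc.trans ⟨Φ, β, hΦ, hβ01, hβ1, hrep⟩ (hMM.kronecker hNN)

/-- Proposition `prop:Gset` for hybrid processings: if `M' ≤_h M` and
`N' ≤_h N`, then every POVM reachable from `(M', N')` by the BLMPP protocol is also
reachable from `(M, N)`. -/
theorem statement16
    (d₁ d₂ d₁' d₂' : ℕ) (hd₁ : 0 < d₁) (hd₂ : 0 < d₂) (hd₁' : 0 < d₁') (hd₂' : 0 < d₂')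
    (X Y X' Y' : Type) [Fintype X] [Fintype Y] [Fintype X'] [Fintype Y']
    (M : X → Matrix (Fin d₁) (Fin d₁) ℂ) (hM : IsPOVM M)
    (N : Y → Matrix (Fin d₂) (Fin d₂) ℂ) (hN : IsPOVM N)
    (M' : X' → Matrix (Fin d₁') (Fin d₁') ℂ) (hM' : IsPOVM M')
    (N' : Y' → Matrix (Fin d₂') (Fin d₂') ℂ) (hN' : IsPOVM N')
    (hMM : IsHybridProc M' M) (hNN : IsHybridProc N' N)
    (e : ℕ) (Z : Type) [Fintype Z]
    (G : Z → Matrix (Fin e) (Fin e) ℂ) (hG : IsPOVM G)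
    (Φ : Matrix (Fin e) (Fin e) ℂ →ₗ[ℂ] Matrix (Fin d₁' × Fin d₂') (Fin d₁' × Fin d₂') ℂ)
    (hΦ : IsChannel Φ)
    (β : Z → X' × Y' → ℝ)
    (hβ01 : ∀ z p, 0 ≤ β z p ∧ β z p ≤ 1) (hβ1 : ∀ p, ∑ z, β z p = 1)
    (hrep : ∀ (ρ : Matrix (Fin e) (Fin e) ℂ) (z : Z),
      (ρ * G z).trace =
        ∑ p : X' × Y', (β z p : ℂ) * (Φ ρ * (M' p.1 ⊗ₖ N' p.2)).trace) :
    ∃ (Φ' : Matrix (Fin e) (Fin e) ℂ →ₗ[ℂ] Matrix (Fin d₁ × Fin d₂) (Fin d₁ × Fin d₂) ℂ)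
      (β' : Z → X × Y → ℝ),
      IsChannel Φ' ∧ (∀ z p, 0 ≤ β' z p ∧ β' z p ≤ 1) ∧ (∀ p, ∑ z, β' z p = 1) ∧
      ∀ (ρ : Matrix (Fin e) (Fin e) ℂ) (z : Z),
        (ρ * G z).trace =
          ∑ p : X × Y, (β' z p : ℂ) * (Φ' ρ * (M p.1 ⊗ₖ N p.2)).trace :=
  statement16_general d₁ d₂ d₁' d₂' X Y X' Y' M N M' N' hMM hNN e Z G Φ hΦ β hβ01 hβ1 hrep
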